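/- arXiv:2205.13966 — 2 statements merged into one kernel-verified Lean document; each statement's English description precedes it below -/
import Mathlib

section
/- For every η > 0 and λ > 0 there exist T > 0 and a Lipschitz continuous function v on [0, ∞) with v(0) = 0, v(t) = 1 for t ≥ T, 0 ≤ v ≤ 1, such that ∫₀^∞ ((1-v)² + λ (v')²) dt ≤ √λ + η. -/
/-!
The profile `1 - exp (-t / √λ)` balances the two terms of the energy, `(1 - v)² = λ v'²`, and
has energy exactly `√λ`, but never reaches `1`. Stretching it by a factor `c > 1` and cutting it
off at `1` gives a Lipschitz profile that reaches `1` at the finite time `√λ log (c / (c - 1))`.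
Before that time both terms are still bounded by `c² exp (-2t / √λ)`, so the energy is at most
`c² √λ`, which tends to `√λ` as `c → 1`.
-/

open MeasureTheory Filter Topology Real Set

noncomputable def expRamp (c s x : ℝ) : ℝ := c * (1 - exp (-(x / s)))

lemma expRamp_zero (c s : ℝ) : expRamp c s 0 = 0 := by simp [expRamp]

lemma hasDerivAt_expRamp (c s x : ℝ) :
    HasDerivAt (expRamp c s) (c / s * exp (-(x / s))) x := by
  refine ((((hasDerivAt_id x).div_const s).fun_neg.exp.const_sub 1).const_mul c).congr_deriv ?_
  simp only [id]
  ring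

lemma monotone_expRamp {c s : ℝ} (hc : 0 ≤ c) (hs : 0 ≤ s) : Monotone (expRamp c s) := by
  intro x y hxy
  unfold expRamp
  gcongr

lemma lipschitzOnWith_expRamp {c s : ℝ} (hc : 0 ≤ c) (hs : 0 < s) :
    LipschitzOnWith (c / s).toNNReal (expRamp c s) (Ici 0) := by
  refine Convex.lipschitzOnWith_of_nnnorm_deriv_le
    (fun x _ => (hasDerivAt_expRamp c s x).differentiableAt) (fun x hx => ?_) (convex_Ici 0)
  rw [(hasDerivAt_expRamp c s x).deriv, ← NNReal.coe_le_coe, coe_nnnorm, Real.norm_eq_abs,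
    Real.coe_toNNReal _ (by positivity), abs_of_nonneg (by positivity)]
  exact mul_le_of_le_one_right (by positivity)
    (exp_le_one_iff.2 (neg_nonpos.2 (div_nonneg hx hs.le)))

noncomputable def cutoffTime (c s : ℝ) : ℝ := s * log (c / (c - 1))

lemma cutoffTime_pos {c s : ℝ} (hc : 1 < c) (hs : 0 < s) : 0 < cutoffTime c s :=
  mul_pos hs (log_pos ((one_lt_div (by linarith)).2 (by linarith)))

lemma expRamp_cutoffTime {c s : ℝ} (hc : 1 < c) (hs : s ≠ 0) :
    expRamp c s (cutoffTime c s) = 1 := by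
  rw [expRamp, cutoffTime, mul_div_cancel_left₀ _ hs, exp_neg,
    exp_log (div_pos (by linarith) (by linarith)), inv_div]
  field_simp
  ring

noncomputable def truncatedProfile (c s t : ℝ) : ℝ := min 1 (expRamp c s (max t 0))

noncomputable def ambrosioTortorelliEnergy (lam : ℝ) (v : ℝ → ℝ) : ℝ :=
  ∫ t in Ioi 0, ((1 - v t) ^ 2 + lam * deriv v t ^ 2)

section truncatedProfile

variable {c s : ℝ}

lemma truncatedProfile_zero (c s : ℝ) : truncatedProfile c s 0 = 0 := by
  simp [truncatedProfile, expRamp_zero]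

lemma truncatedProfile_mem_Icc (hc : 0 ≤ c) (hs : 0 ≤ s) (t : ℝ) :
    truncatedProfile c s t ∈ Icc 0 1 := by
  refine ⟨le_min zero_le_one ?_, min_le_left _ _⟩
  simpa only [expRamp_zero] using monotone_expRamp hc hs (le_max_right t 0)

lemma truncatedProfile_of_le (hc : 1 < c) (hs : 0 < s) {t : ℝ} (ht₀ : 0 ≤ t)
    (htT : t ≤ cutoffTime c s) :
    truncatedProfile c s t = expRamp c s t := by
  rw [truncatedProfile, max_eq_left ht₀, min_eq_right]
  rw [← expRamp_cutoffTime hc hs.ne']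
  exact monotone_expRamp (by linarith) hs.le htT

lemma truncatedProfile_of_ge (hc : 1 < c) (hs : 0 < s) {t : ℝ} (ht : cutoffTime c s ≤ t) :
    truncatedProfile c s t = 1 := by
  rw [truncatedProfile, min_eq_left]
  rw [← expRamp_cutoffTime hc hs.ne']
  exact monotone_expRamp (by linarith) hs.le (ht.trans (le_max_left t 0))

lemma lipschitzWith_truncatedProfile (hc : 0 ≤ c) (hs : 0 < s) :
    LipschitzWith (c / s).toNNReal (truncatedProfile c s) := by
  have h := (lipschitzOnWith_expRamp hc hs).comp (LipschitzWith.id.max_const 0).lipschitzOnWith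
    (mapsTo_univ_iff.2 fun t => le_max_right t 0)
  rw [mul_one] at h
  exact (lipschitzOnWith_univ.1 h).const_min 1

lemma deriv_truncatedProfile_of_mem_Ioo (hc : 1 < c) (hs : 0 < s) {t : ℝ}
    (ht : t ∈ Ioo 0 (cutoffTime c s)) :
    deriv (truncatedProfile c s) t = c / s * exp (-(t / s)) := by
  have h : truncatedProfile c s =ᶠ[𝓝 t] expRamp c s :=
    eventuallyEq_of_mem (isOpen_Ioo.mem_nhds ht) fun x hx =>
      truncatedProfile_of_le hc hs hx.1.le hx.2.le
  rw [h.deriv_eq, (hasDerivAt_expRamp c s t).deriv]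

lemma deriv_truncatedProfile_of_gt (hc : 1 < c) (hs : 0 < s) {t : ℝ} (ht : cutoffTime c s < t) :
    deriv (truncatedProfile c s) t = 0 := by
  have h : truncatedProfile c s =ᶠ[𝓝 t] fun _ => 1 :=
    eventuallyEq_of_mem (isOpen_Ioi.mem_nhds ht) fun x hx => truncatedProfile_of_ge hc hs hx.le
  rw [h.deriv_eq, deriv_const]

lemma energyDensity_truncatedProfile_le (hc : 1 < c) (hs : 0 < s) {t : ℝ} (ht : 0 < t)
    (htT : t ≠ cutoffTime c s) :
    (1 - truncatedProfile c s t) ^ 2 + s ^ 2 * deriv (truncatedProfile c s) t ^ 2 ≤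
      2 * c ^ 2 * exp (-(2 / s) * t) := by
  have hexp : exp (-(2 / s) * t) = exp (-(t / s)) ^ 2 := by rw [← exp_nat_mul]; ring_nf
  rcases htT.lt_or_gt with hlt | hgt
  · have hv := truncatedProfile_of_le hc hs ht.le hlt.le
    have hv_le := (truncatedProfile_mem_Icc (zero_le_one.trans hc.le) hs.le t).2
    rw [hv, expRamp] at hv_le
    rw [deriv_truncatedProfile_of_mem_Ioo hc hs ⟨ht, hlt⟩, hv, expRamp, hexp]
    have he := exp_pos (-(t / s))
    -- `1 - v t = c e - (c - 1)` lies in `[0, c e]`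
    have hgap : (1 - c * (1 - exp (-(t / s)))) ^ 2 ≤ (c * exp (-(t / s))) ^ 2 :=
      pow_le_pow_left₀ (by linarith : 0 ≤ 1 - c * (1 - exp (-(t / s)))) (by nlinarith) 2
    calc _ = (1 - c * (1 - exp (-(t / s)))) ^ 2 + (c * exp (-(t / s))) ^ 2 := by
          field_simp
      _ ≤ _ := by nlinarith
  · rw [truncatedProfile_of_ge hc hs hgt.le, deriv_truncatedProfile_of_gt hc hs hgt]
    norm_num
    positivity

lemma ambrosioTortorelliEnergy_truncatedProfile_le (hc : 1 < c) (hs : 0 < s) :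
    ambrosioTortorelliEnergy (s ^ 2) (truncatedProfile c s) ≤ c ^ 2 * s := by
  have hrate : -(2 / s) < 0 := neg_neg_of_pos (div_pos two_pos hs)
  -- the kink at the cutoff time, where `deriv` takes a junk value, is a null set
  have hne : ∀ᵐ t ∂volume.restrict (Ioi (0 : ℝ)), t ≠ cutoffTime c s :=
    ae_restrict_of_ae (ae_iff.2 (by simp))
  calc ambrosioTortorelliEnergy (s ^ 2) (truncatedProfile c s)
      ≤ ∫ t in Ioi 0, 2 * c ^ 2 * exp (-(2 / s) * t) := by
        refine integral_mono_of_nonneg (ae_of_all _ fun t => by positivity)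
          ((integrableOn_exp_mul_Ioi hrate 0).const_mul _) ?_
        filter_upwards [ae_restrict_mem measurableSet_Ioi, hne] with t ht htT
        exact energyDensity_truncatedProfile_le hc hs ht htT
    _ = c ^ 2 * s := by
        rw [integral_const_mul, integral_exp_mul_Ioi hrate, mul_zero, exp_zero]
        field_simp

end truncatedProfile

lemma exists_one_lt_sq_mul_le {s η : ℝ} (hs : 0 < s) (hη : 0 < η) :
    ∃ c : ℝ, 1 < c ∧ c ^ 2 * s ≤ s + η := by
  set ε := min 1 (η / (3 * s))
  have hε : 0 < ε := lt_min one_pos (by positivity)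
  have hε_le_one : ε ≤ 1 := min_le_left _ _
  have hε_small : ε * (3 * s) ≤ η := (le_div_iff₀ (by positivity)).1 (min_le_right _ _)
  exact ⟨1 + ε, by linarith, by nlinarith⟩

theorem almost_optimal_lipschitz_profile (η lam : ℝ) (hη : 0 < η) (hlam : 0 < lam) :
    ∃ T : ℝ, 0 < T ∧ ∃ v : ℝ → ℝ, (∃ K : NNReal, LipschitzWith K v) ∧
      v 0 = 0 ∧ (∀ t, T ≤ t → v t = 1) ∧ (∀ t, 0 ≤ v t ∧ v t ≤ 1) ∧
      (∫ t in Set.Ioi (0 : ℝ), ((1 - v t) ^ 2 + lam * (deriv v t) ^ 2))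
        ≤ Real.sqrt lam + η := by
  have hs : 0 < √lam := sqrt_pos.2 hlam
  obtain ⟨c, hc, hc_energy⟩ := exists_one_lt_sq_mul_le hs hη
  have hc₀ : 0 ≤ c := zero_le_one.trans hc.le
  refine ⟨cutoffTime c √lam, cutoffTime_pos hc hs, truncatedProfile c √lam,
    ⟨_, lipschitzWith_truncatedProfile hc₀ hs⟩, truncatedProfile_zero c √lam,
    fun t ht => truncatedProfile_of_ge hc hs ht, truncatedProfile_mem_Icc hc₀ hs.le, ?_⟩
  have h := ambrosioTortorelliEnergy_truncatedProfile_le hc hs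
  rw [sq_sqrt hlam.le] at h
  exact h.trans hc_energy
end

section
/- Let h : ℝⁿ × ℝⁿ → [0,∞) be Borel measurable, Q-periodic in x, 2-homogeneous in w, with c₃|w|² ≤ h(x,w) ≤ c₄|w|². Define h_hom(w) = inf { ∫_Q h(x, ∇v(x) + w) dx : v ∈ W₀^{1,2}(Q) }, where Q = (0,1)ⁿ (up to translation, the unit cube). Then h_hom satisfies c₃|w|² ≤ h_hom(w) ≤ c₄|w|² for all w ∈ ℝⁿ and h_hom is positively 2-homogeneous: h_hom(sw) = s² h_hom(w) for all s ∈ ℝ. -/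
open MeasureTheory Filter Topology

/-- The unit cube `(0,1)ⁿ`. -/
def unitCube (n : ℕ) : Set (EuclideanSpace ℝ (Fin n)) :=
  {x | ∀ i, x i ∈ Set.Ioo (0 : ℝ) 1}

/-- The homogenised integrand, defined through the cell formula with
competitors vanishing outside the unit cube (a model for `W₀^{1,2}(Q)`). -/
noncomputable def hHom {n : ℕ}
    (h : EuclideanSpace ℝ (Fin n) → EuclideanSpace ℝ (Fin n) → ℝ)
    (w : EuclideanSpace ℝ (Fin n)) : ℝ :=
  sInf {c : ℝ | ∃ v : EuclideanSpace ℝ (Fin n) → ℝ,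
    ContDiff ℝ 1 v ∧ (∀ x, x ∉ unitCube n → v x = 0) ∧
    c = ∫ x in unitCube n, h x (gradient v x + w)}


/-! For a competitor `v` vanishing off the cube `Q`, the derivative `∇v` has mean zero over `Q`
(integrate by parts against the constant `1`; the frontier of the convex set `Q` is null). Hence
`∫_Q ‖∇v + w‖² ≥ ∫_Q (‖w‖² + 2⟪∇v, w⟫) = ‖w‖²`, which with `h ≥ c₃‖·‖²` gives the lower bound;
the competitor `v = 0` gives the upper bound. The map `v ↦ s • v` is a bijection between the
competitors for `w` and for `s • w` (`s ≠ 0`) which multiplies every energy by `s²`, and the case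
`s = 0` follows from the bounds. -/

open Set Pointwise

theorem Continuous.integrableOn_of_isBounded {X F : Type*} [PseudoMetricSpace X] [ProperSpace X]
    [MeasurableSpace X] [OpensMeasurableSpace X] {μ : Measure X} [IsFiniteMeasureOnCompacts μ]
    [NormedAddCommGroup F] {f : X → F} (hf : Continuous f) {s : Set X}
    (hs : Bornology.IsBounded s) : IntegrableOn f s μ :=
  (hf.continuousOn.integrableOn_compact' hs.isCompact_closure
    isClosed_closure.measurableSet).mono_set subset_closure

section ZeroMeanDerivative

variable {E : Type*} [NormedAddCommGroup E] [NormedSpace ℝ E] [FiniteDimensional ℝ E]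
  [MeasurableSpace E] [BorelSpace E] {μ : Measure E} [μ.IsAddHaarMeasure] {v : E → ℝ}

theorem integral_fderiv_apply_eq_zero_of_integrable (hv : Differentiable ℝ v)
    (hvi : Integrable v μ) {u : E} (hv'i : Integrable (fun x => fderiv ℝ v x u) μ) :
    ∫ x, fderiv ℝ v x u ∂μ = 0 := by
  simpa using integral_mul_fderiv_eq_neg_fderiv_mul_of_integrable (μ := μ)
    (f := fun _ => (1 : ℝ)) (g := v) (v := u) (by simp) (by simpa using hv'i)
    (by simpa using hvi) (fun _ _ => differentiableAt_const 1) (fun x _ => hv x)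

theorem setIntegral_fderiv_apply_eq_zero {s : Set E} (hs : Bornology.IsBounded s)
    (hfr : μ (frontier s) = 0) (hv : ContDiff ℝ 1 v) (h0 : ∀ x ∉ s, v x = 0) (u : E) :
    ∫ x in s, fderiv ℝ v x u ∂μ = 0 := by
  have hts : tsupport v ⊆ closure s :=
    closure_mono fun x hx => by_contra fun hxs => hx (h0 x hxs)
  have hsupp : HasCompactSupport v :=
    hs.isCompact_closure.of_isClosed_subset (isClosed_tsupport v) hts
  rw [setIntegral_eq_integral_of_ae_compl_eq_zero]
  · exact integral_fderiv_apply_eq_zero_of_integrable (hv.differentiable one_ne_zero)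
      (hv.continuous.integrable_of_hasCompactSupport hsupp)
      (((hv.continuous_fderiv one_ne_zero).clm_apply continuous_const)
        |>.integrable_of_hasCompactSupport (hsupp.fderiv_apply ℝ u))
  · filter_upwards [measure_eq_zero_iff_ae_notMem.mp hfr] with x hxf hxs
    have hxc : x ∉ closure s := by
      rw [closure_eq_self_union_frontier]
      exact fun h => h.elim hxs hxf
    have hv'x : fderiv ℝ v x = 0 :=
      Function.notMem_support.mp fun h => hxc (hts (support_fderiv_subset ℝ h))
    rw [hv'x, zero_apply]

end ZeroMeanDerivative

section Gradient

variable {E : Type*} [NormedAddCommGroup E] [InnerProductSpace ℝ E] [CompleteSpace E]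
  {v : E → ℝ}

theorem ContDiff.continuous_gradient (hv : ContDiff ℝ 1 v) : Continuous (gradient v) :=
  (InnerProductSpace.toDual ℝ E).symm.continuous.comp (hv.continuous_fderiv one_ne_zero)

theorem gradient_fun_const_smul {x : E} (hv : DifferentiableAt ℝ v x) (s : ℝ) :
    gradient (fun y => s • v y) x = s • gradient v x := by
  refine ext_inner_right ℝ fun y => ?_
  rw [inner_gradient_left, fderiv_fun_const_smul hv, real_inner_smul_left, inner_gradient_left]
  rfl

variable [FiniteDimensional ℝ E] [MeasurableSpace E] [BorelSpace E] {μ : Measure E}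
  [μ.IsAddHaarMeasure]

theorem measureReal_mul_sq_norm_le_setIntegral_sq_norm_gradient_add {s : Set E}
    (hs : Bornology.IsBounded s) (hfr : μ (frontier s) = 0) (hv : ContDiff ℝ 1 v)
    (h0 : ∀ x ∉ s, v x = 0) (w : E) :
    μ.real s * ‖w‖ ^ 2 ≤ ∫ x in s, ‖gradient v x + w‖ ^ 2 ∂μ := by
  have hpt : ∀ x, ‖w‖ ^ 2 + 2 * fderiv ℝ v x w ≤ ‖gradient v x + w‖ ^ 2 := fun x => by
    rw [norm_add_sq_real, inner_gradient_left]
    nlinarith [sq_nonneg ‖gradient v x‖]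
  have hcont : Continuous fun x => fderiv ℝ v x w :=
    (hv.continuous_fderiv one_ne_zero).clm_apply continuous_const
  calc μ.real s * ‖w‖ ^ 2 = ∫ x in s, (‖w‖ ^ 2 + 2 * fderiv ℝ v x w) ∂μ := by
        rw [integral_add (continuous_const.integrableOn_of_isBounded hs)
          ((hcont.const_mul 2).integrableOn_of_isBounded hs), integral_const_mul,
          setIntegral_fderiv_apply_eq_zero hs hfr hv h0, setIntegral_const, smul_eq_mul]
        ring
    _ ≤ ∫ x in s, ‖gradient v x + w‖ ^ 2 ∂μ :=
        setIntegral_mono ((continuous_const.add (hcont.const_mul 2)).integrableOn_of_isBounded hs)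
          (((hv.continuous_gradient.add continuous_const).norm.pow 2).integrableOn_of_isBounded hs)
          hpt

end Gradient

section UnitCube

variable {n : ℕ}

theorem unitCube_eq_preimage_pi (n : ℕ) :
    unitCube n = (MeasurableEquiv.toLp 2 (Fin n → ℝ)).symm ⁻¹' univ.pi fun _ => Ioo 0 1 := by
  ext x
  exact ⟨fun h i _ => h i, fun h i => h i trivial⟩

theorem measurableSet_unitCube : MeasurableSet (unitCube n) := by
  rw [unitCube_eq_preimage_pi]
  exact (MeasurableEquiv.toLp 2 (Fin n → ℝ)).symm.measurable
    (MeasurableSet.univ_pi fun _ => measurableSet_Ioo)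

theorem volume_real_unitCube : volume.real (unitCube n) = 1 := by
  rw [measureReal_def, unitCube_eq_preimage_pi,
    (EuclideanSpace.volume_preserving_symm_measurableEquiv_toLp (Fin n)).measure_preimage
      (MeasurableSet.univ_pi fun _ => measurableSet_Ioo).nullMeasurableSet,
    volume_pi_pi]
  simp

theorem convex_unitCube : Convex ℝ (unitCube n) := fun _ hx _ hy _ _ ha hb hab i => by
  simpa using convex_Ioo (0 : ℝ) 1 (hx i) (hy i) ha hb hab

theorem isBounded_unitCube : Bornology.IsBounded (unitCube n) := by
  refine ((isCompact_univ_pi fun _ => isCompact_Icc (a := (0 : ℝ)) (b := 1)).image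
    (PiLp.continuous_toLp 2 fun _ : Fin n => ℝ)).isBounded.subset fun x hx => ?_
  exact ⟨WithLp.ofLp x, fun i _ => Ioo_subset_Icc_self (hx i), rfl⟩

end UnitCube

section CellFormula

variable {n : ℕ} {h : EuclideanSpace ℝ (Fin n) → EuclideanSpace ℝ (Fin n) → ℝ}

def cellEnergies (h : EuclideanSpace ℝ (Fin n) → EuclideanSpace ℝ (Fin n) → ℝ)
    (w : EuclideanSpace ℝ (Fin n)) : Set ℝ :=
  {c : ℝ | ∃ v : EuclideanSpace ℝ (Fin n) → ℝ,
    ContDiff ℝ 1 v ∧ (∀ x, x ∉ unitCube n → v x = 0) ∧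
    c = ∫ x in unitCube n, h x (gradient v x + w)}

theorem hHom_eq_sInf_cellEnergies (h : EuclideanSpace ℝ (Fin n) → EuclideanSpace ℝ (Fin n) → ℝ)
    (w : EuclideanSpace ℝ (Fin n)) : hHom h w = sInf (cellEnergies h w) :=
  rfl

theorem setIntegral_unitCube_mem_cellEnergies (w : EuclideanSpace ℝ (Fin n)) :
    ∫ x in unitCube n, h x w ∈ cellEnergies h w :=
  ⟨fun _ => 0, contDiff_const, fun _ _ => rfl, by simp⟩

theorem smul_mem_cellEnergies (hhom : ∀ x (s : ℝ) w, h x (s • w) = s ^ 2 * h x w) (s : ℝ)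
    {w : EuclideanSpace ℝ (Fin n)} {c : ℝ} (hc : c ∈ cellEnergies h w) :
    s ^ 2 * c ∈ cellEnergies h (s • w) := by
  obtain ⟨v, hv, h0, rfl⟩ := hc
  refine ⟨fun x => s • v x, hv.const_smul s, fun x hx => by simp [h0 x hx], ?_⟩
  rw [← integral_const_mul]
  congr 1 with x
  rw [gradient_fun_const_smul (hv.differentiable one_ne_zero x), ← smul_add, hhom]

theorem cellEnergies_smul (hhom : ∀ x (s : ℝ) w, h x (s • w) = s ^ 2 * h x w) {s : ℝ}
    (hs : s ≠ 0) (w : EuclideanSpace ℝ (Fin n)) :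
    cellEnergies h (s • w) = s ^ 2 • cellEnergies h w := by
  refine Subset.antisymm (fun c hc => ⟨(s⁻¹) ^ 2 * c, ?_, ?_⟩) ?_
  · simpa [smul_smul, hs] using smul_mem_cellEnergies hhom s⁻¹ hc
  · simp [smul_eq_mul, hs]
  · rintro _ ⟨c, hc, rfl⟩
    exact smul_mem_cellEnergies hhom s hc

theorem hHom_smul (hhom : ∀ x (s : ℝ) w, h x (s • w) = s ^ 2 * h x w) {s : ℝ} (hs : s ≠ 0)
    (w : EuclideanSpace ℝ (Fin n)) : hHom h (s • w) = s ^ 2 * hHom h w := by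
  rw [hHom_eq_sInf_cellEnergies, cellEnergies_smul hhom hs, Real.sInf_smul_of_nonneg (sq_nonneg s)]
  rfl

variable {c₃ c₄ : ℝ}

theorem integrableOn_unitCube_comp
    (hmeas : Measurable fun p : EuclideanSpace ℝ (Fin n) × EuclideanSpace ℝ (Fin n) =>
      h p.1 p.2)
    (hbound : ∀ x w, c₃ * ‖w‖ ^ 2 ≤ h x w ∧ h x w ≤ c₄ * ‖w‖ ^ 2)
    {g : EuclideanSpace ℝ (Fin n) → EuclideanSpace ℝ (Fin n)} (hg : Continuous g) :
    IntegrableOn (fun x => h x (g x)) (unitCube n) :=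
  integrable_of_le_of_le (hmeas.comp (measurable_id.prodMk hg.measurable)).aestronglyMeasurable
    (ae_of_all _ fun x => (hbound x (g x)).1) (ae_of_all _ fun x => (hbound x (g x)).2)
    ((continuous_const.mul (hg.norm.pow 2)).integrableOn_of_isBounded isBounded_unitCube)
    ((continuous_const.mul (hg.norm.pow 2)).integrableOn_of_isBounded isBounded_unitCube)

theorem le_of_mem_cellEnergies
    (hmeas : Measurable fun p : EuclideanSpace ℝ (Fin n) × EuclideanSpace ℝ (Fin n) =>
      h p.1 p.2)
    (hc₃ : 0 ≤ c₃) (hbound : ∀ x w, c₃ * ‖w‖ ^ 2 ≤ h x w ∧ h x w ≤ c₄ * ‖w‖ ^ 2)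
    {w : EuclideanSpace ℝ (Fin n)} {c : ℝ} (hc : c ∈ cellEnergies h w) : c₃ * ‖w‖ ^ 2 ≤ c := by
  obtain ⟨v, hv, h0, rfl⟩ := hc
  have hg : Continuous fun x => gradient v x + w := hv.continuous_gradient.add continuous_const
  calc c₃ * ‖w‖ ^ 2 = c₃ * (volume.real (unitCube n) * ‖w‖ ^ 2) := by
        rw [volume_real_unitCube, one_mul]
    _ ≤ c₃ * ∫ x in unitCube n, ‖gradient v x + w‖ ^ 2 := by
        gcongr
        exact measureReal_mul_sq_norm_le_setIntegral_sq_norm_gradient_add isBounded_unitCube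
          (convex_unitCube.addHaar_frontier volume) hv h0 w
    _ = ∫ x in unitCube n, c₃ * ‖gradient v x + w‖ ^ 2 := (integral_const_mul _ _).symm
    _ ≤ ∫ x in unitCube n, h x (gradient v x + w) :=
        setIntegral_mono ((continuous_const.mul (hg.norm.pow 2)).integrableOn_of_isBounded
          isBounded_unitCube) (integrableOn_unitCube_comp hmeas hbound hg)
          fun x => (hbound x _).1

theorem setIntegral_unitCube_le
    (hmeas : Measurable fun p : EuclideanSpace ℝ (Fin n) × EuclideanSpace ℝ (Fin n) =>
      h p.1 p.2)
    (hbound : ∀ x w, c₃ * ‖w‖ ^ 2 ≤ h x w ∧ h x w ≤ c₄ * ‖w‖ ^ 2)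
    (w : EuclideanSpace ℝ (Fin n)) : ∫ x in unitCube n, h x w ≤ c₄ * ‖w‖ ^ 2 := by
  calc ∫ x in unitCube n, h x w ≤ ∫ _ in unitCube n, c₄ * ‖w‖ ^ 2 :=
        setIntegral_mono (integrableOn_unitCube_comp hmeas hbound continuous_const)
          (continuous_const.integrableOn_of_isBounded isBounded_unitCube) fun x => (hbound x w).2
    _ = c₄ * ‖w‖ ^ 2 := by rw [setIntegral_const, volume_real_unitCube, one_smul]

end CellFormula

theorem hHom_bounds_and_homogeneity_general {n : ℕ}
    (h : EuclideanSpace ℝ (Fin n) → EuclideanSpace ℝ (Fin n) → ℝ)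
    (hmeas : Measurable fun p : EuclideanSpace ℝ (Fin n) × EuclideanSpace ℝ (Fin n) =>
      h p.1 p.2)
    (hhom : ∀ x (s : ℝ) w, h x (s • w) = s ^ 2 * h x w)
    (c₃ c₄ : ℝ) (hc₃ : 0 < c₃)
    (hbound : ∀ x w, c₃ * ‖w‖ ^ 2 ≤ h x w ∧ h x w ≤ c₄ * ‖w‖ ^ 2) :
    (∀ w, c₃ * ‖w‖ ^ 2 ≤ hHom h w ∧ hHom h w ≤ c₄ * ‖w‖ ^ 2) ∧
    (∀ (s : ℝ) w, hHom h (s • w) = s ^ 2 * hHom h w) := by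
  have hlower : ∀ w, c₃ * ‖w‖ ^ 2 ≤ hHom h w := fun w =>
    le_csInf ⟨_, setIntegral_unitCube_mem_cellEnergies w⟩ fun _ =>
      le_of_mem_cellEnergies hmeas hc₃.le hbound
  have hupper : ∀ w, hHom h w ≤ c₄ * ‖w‖ ^ 2 := fun w =>
    (csInf_le ⟨_, fun _ => le_of_mem_cellEnergies hmeas hc₃.le hbound⟩
      (setIntegral_unitCube_mem_cellEnergies w)).trans (setIntegral_unitCube_le hmeas hbound w)
  refine ⟨fun w => ⟨hlower w, hupper w⟩, fun s w => ?_⟩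
  rcases eq_or_ne s 0 with rfl | hs
  · have hzero : hHom h 0 = 0 := le_antisymm (by simpa using hupper 0) (by simpa using hlower 0)
    simp [hzero]
  · exact hHom_smul hhom hs w

theorem hHom_bounds_and_homogeneity {n : ℕ}
    (h : EuclideanSpace ℝ (Fin n) → EuclideanSpace ℝ (Fin n) → ℝ)
    (hmeas : Measurable fun p : EuclideanSpace ℝ (Fin n) × EuclideanSpace ℝ (Fin n) =>
      h p.1 p.2)
    (hper : ∀ x w (i : Fin n), h (x + EuclideanSpace.single i (1 : ℝ)) w = h x w)
    (hhom : ∀ x (s : ℝ) w, h x (s • w) = s ^ 2 * h x w)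
    (c₃ c₄ : ℝ) (hc₃ : 0 < c₃) (hc : c₃ ≤ c₄)
    (hbound : ∀ x w, c₃ * ‖w‖ ^ 2 ≤ h x w ∧ h x w ≤ c₄ * ‖w‖ ^ 2) :
    (∀ w, c₃ * ‖w‖ ^ 2 ≤ hHom h w ∧ hHom h w ≤ c₄ * ‖w‖ ^ 2) ∧
    (∀ (s : ℝ) w, hHom h (s • w) = s ^ 2 * hHom h w) :=
  hHom_bounds_and_homogeneity_general h hmeas hhom c₃ c₄ hc₃ hbound
end
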